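/- Let n, q ≥ 1, let D be an n×n diagonal matrix with nonnegative entries, and let E = D ⊗ I_q ∈ ℝ^{nq×nq}. Let M be a real symmetric nq×nq matrix, indexed by pairs (i,α) ∈ [n]×[q], with spectral norm ‖M‖ ≤ 1 and M_{(i,α),(i,β)} = 0 for all i ∈ [n] and α, β ∈ [q]. Let ε > 0 and let Π be the orthogonal projection onto the span of the eigenvectors of M with eigenvalue at least ε. Let m ∈ ℝ^{nq} and let S be a real symmetric nq×nq matrix satisfying: S − mmᵀ is positive semidefinite; 0 ≤ S_{(i,α),(i,α)} ≤ m_{(i,α)} for all i, α; and Σ_{α∈[q]} m_{(i,α)} = 1 for every i ∈ [n]. Suppose in addition there exists v ∈ ℝ^{nq} with Tr(Π E^{1/2} S E^{1/2} Π) − 2·vᵀ Π E^{1/2} m + ‖v‖² ≤ ε·Tr(D). Then ⟨E^{1/2} M E^{1/2}, S⟩ − mᵀ E^{1/2} M E^{1/2} m ≤ 5ε·Tr(D). -/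

import Mathlib

open Matrix Finset
open scoped Matrix.Norms.L2Operator

/-- The orthogonal projection onto the span of the eigenvectors of the real symmetric
matrix `M` with eigenvalue at least `ε`, written as a matrix: the sum of the outer
products `u uᵀ` over an orthonormal eigenbasis, restricted to eigenvalues `≥ ε`. -/
noncomputable def eigProj {ι : Type*} [Fintype ι] [DecidableEq ι]
    {M : Matrix ι ι ℝ} (hM : M.IsHermitian) (ε : ℝ) : Matrix ι ι ℝ :=
  ∑ i ∈ Finset.univ.filter (fun i => ε ≤ hM.eigenvalues i),
    vecMulVec (fun a => hM.eigenvectorBasis i a) (fun a => hM.eigenvectorBasis i a)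

/-- `E^{1/2} = D^{1/2} ⊗ I_q`: the diagonal `nq × nq` matrix with entries `√(D_{ii})`. -/
noncomputable def kronSqrtDiag {n q : ℕ} (D : Matrix (Fin n) (Fin n) ℝ) :
    Matrix (Fin n × Fin q) (Fin n × Fin q) ℝ :=
  Matrix.diagonal fun p => Real.sqrt (D p.1 p.1)

section helpers

set_option linter.unusedSectionVars false

variable {ι : Type*} [Fintype ι] [DecidableEq ι]

lemma aux_vmv_mulVec (a b x : ι → ℝ) : vecMulVec a b *ᵥ x = (b ⬝ᵥ x) • a := by
  ext k
  simp only [mulVec, dotProduct, vecMulVec_apply, Pi.smul_apply, smul_eq_mul, Finset.sum_mul]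
  exact Finset.sum_congr rfl fun l _ => by ring

lemma aux_vmv_mul_vmv (a b c d : ι → ℝ) :
    vecMulVec a b * vecMulVec c d = (b ⬝ᵥ c) • vecMulVec a d := by
  ext k l
  simp only [mul_apply, vecMulVec_apply, Matrix.smul_apply, smul_eq_mul, dotProduct, Finset.sum_mul]
  exact Finset.sum_congr rfl fun y _ => by ring

lemma aux_vmv_mul (a b : ι → ℝ) (X : Matrix ι ι ℝ) :
    vecMulVec a b * X = vecMulVec a (Xᵀ *ᵥ b) := by
  ext k l
  simp only [mul_apply, vecMulVec_apply, mulVec, dotProduct, transpose_apply, Finset.mul_sum]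
  exact Finset.sum_congr rfl fun y _ => by ring

lemma aux_vmv_smul (r : ℝ) (a b : ι → ℝ) : vecMulVec a (r • b) = r • vecMulVec a b := by
  ext k l
  simp only [vecMulVec_apply, Pi.smul_apply, Matrix.smul_apply, smul_eq_mul]
  ring

lemma aux_vmv_herm (a : ι → ℝ) : (vecMulVec a a).IsHermitian := by
  show _ᴴ = _
  ext k l
  simp [conjTranspose_apply, vecMulVec_apply, mul_comm]

lemma aux_psd_vmv (a : ι → ℝ) : (vecMulVec a a).PosSemidef := by
  refine .of_dotProduct_mulVec_nonneg (aux_vmv_herm a) fun x => ?_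
  rw [aux_vmv_mulVec]
  simp only [star_trivial, dotProduct_smul, smul_eq_mul]
  rw [dotProduct_comm x a]
  exact mul_self_nonneg _

lemma aux_psd_smul {A : Matrix ι ι ℝ} (hA : A.PosSemidef) {c : ℝ} (hc : 0 ≤ c) :
    (c • A).PosSemidef := by
  refine .of_dotProduct_mulVec_nonneg ?_ fun x => ?_
  · show _ᴴ = _
    rw [conjTranspose_smul, hA.1]
    simp
  · rw [smul_mulVec, dotProduct_smul, smul_eq_mul]
    exact mul_nonneg hc (hA.dotProduct_mulVec_nonneg x)

lemma aux_psd_sum {κ : Type*} {s : Finset κ} {f : κ → Matrix ι ι ℝ}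
    (h : ∀ i ∈ s, (f i).PosSemidef) : (∑ i ∈ s, f i).PosSemidef :=
  Finset.sum_induction f _ (fun _ _ ha hb => ha.add hb) .zero h

lemma aux_psd_diag_nonneg {A : Matrix ι ι ℝ} (hA : A.PosSemidef) (i : ι) : 0 ≤ A i i := by
  exact hA.diag_nonneg

lemma aux_psd_trace_nonneg {A B : Matrix ι ι ℝ} (hA : A.PosSemidef) (hB : B.PosSemidef) :
    0 ≤ (A * B).trace := by
  obtain ⟨C, hC⟩ : ∃ C : Matrix ι ι ℝ, A = Cᴴ * C := by
    open scoped MatrixOrder in exact CStarAlgebra.nonneg_iff_eq_star_mul_self.mp hA.nonneg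
  rw [hC, Matrix.mul_assoc, Matrix.trace_mul_comm]
  have h : (C * B * Cᴴ).PosSemidef := hB.mul_mul_conjTranspose_same C
  show 0 ≤ ∑ i, (C * B * Cᴴ) i i
  exact Finset.sum_nonneg fun i _ => aux_psd_diag_nonneg h i

lemma aux_trace_mul_vmv (A : Matrix ι ι ℝ) (m : ι → ℝ) :
    (A * vecMulVec m m).trace = m ⬝ᵥ (A *ᵥ m) := by
  simp only [Matrix.trace, Matrix.diag, mul_apply, vecMulVec_apply, dotProduct, mulVec,
    Finset.mul_sum]
  exact Finset.sum_congr rfl fun x _ => Finset.sum_congr rfl fun y _ => by ring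

lemma aux_sum_mulVec {κ : Type*} (s : Finset κ) (A : κ → Matrix ι ι ℝ) (x : ι → ℝ) :
    (∑ i ∈ s, A i) *ᵥ x = ∑ i ∈ s, A i *ᵥ x := by
  classical
  induction s using Finset.induction_on with
  | empty => simp
  | insert _ _ h ih => rw [Finset.sum_insert h, Finset.sum_insert h, add_mulVec, ih]

lemma aux_dot_self_nonneg (x : ι → ℝ) : 0 ≤ x ⬝ᵥ x :=
  Finset.sum_nonneg fun i _ => mul_self_nonneg _

end helpers

section spectral

variable {ι : Type*} [Fintype ι] [DecidableEq ι] {M : Matrix ι ι ℝ} (hM : M.IsHermitian)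

lemma aux_dot_eig (i j : ι) :
    ((fun a => hM.eigenvectorBasis i a) ⬝ᵥ fun a => hM.eigenvectorBasis j a)
      = if i = j then (1 : ℝ) else 0 := by
  have h := hM.eigenvectorBasis.orthonormal
  rw [orthonormal_iff_ite] at h
  have h' := h i j
  simpa [PiLp.inner_apply, RCLike.inner_apply, dotProduct, starRingEnd_apply, mul_comm] using h'

lemma aux_eig_mulVec (j : ι) :
    M *ᵥ (fun a => hM.eigenvectorBasis j a)
      = hM.eigenvalues j • (fun a => hM.eigenvectorBasis j a) :=
  hM.mulVec_eigenvectorBasis j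

lemma aux_matrix_eq {A B : Matrix ι ι ℝ}
    (h : ∀ j, A *ᵥ (fun a => hM.eigenvectorBasis j a)
      = B *ᵥ (fun a => hM.eigenvectorBasis j a)) : A = B := by
  have hU : A * (hM.eigenvectorUnitary : Matrix ι ι ℝ)
      = B * (hM.eigenvectorUnitary : Matrix ι ι ℝ) := by
    ext x j
    have hx := congrFun (h j) x
    simp only [mulVec, dotProduct] at hx
    simp only [mul_apply, IsHermitian.eigenvectorUnitary_apply]
    exact hx
  have hUU : (hM.eigenvectorUnitary : Matrix ι ι ℝ)
      * star (hM.eigenvectorUnitary : Matrix ι ι ℝ) = 1 :=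
    (Matrix.mem_unitaryGroup_iff).mp (hM.eigenvectorUnitary).2
  calc A = A * ((hM.eigenvectorUnitary : Matrix ι ι ℝ)
          * star (hM.eigenvectorUnitary : Matrix ι ι ℝ)) := by rw [hUU, mul_one]
    _ = A * (hM.eigenvectorUnitary : Matrix ι ι ℝ)
          * star (hM.eigenvectorUnitary : Matrix ι ι ℝ) := by rw [mul_assoc]
    _ = B * (hM.eigenvectorUnitary : Matrix ι ι ℝ)
          * star (hM.eigenvectorUnitary : Matrix ι ι ℝ) := by rw [hU]
    _ = B * ((hM.eigenvectorUnitary : Matrix ι ι ℝ)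
          * star (hM.eigenvectorUnitary : Matrix ι ι ℝ)) := by rw [mul_assoc]
    _ = B := by rw [hUU, mul_one]

lemma aux_sum_eigP :
    ∑ i, vecMulVec (fun a => hM.eigenvectorBasis i a) (fun a => hM.eigenvectorBasis i a)
      = (1 : Matrix ι ι ℝ) := by
  apply aux_matrix_eq hM
  intro j
  rw [aux_sum_mulVec, one_mulVec]
  have : ∀ i : ι, vecMulVec (fun a => hM.eigenvectorBasis i a)
      (fun a => hM.eigenvectorBasis i a) *ᵥ (fun a => hM.eigenvectorBasis j a)
      = if i = j then (fun a => hM.eigenvectorBasis i a) else 0 := by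
    intro i
    rw [aux_vmv_mulVec, aux_dot_eig hM i j]
    split_ifs <;> simp
  simp only [this]
  simp

lemma aux_sum_smul_eigP :
    ∑ i, hM.eigenvalues i •
        vecMulVec (fun a => hM.eigenvectorBasis i a) (fun a => hM.eigenvectorBasis i a)
      = M := by
  apply aux_matrix_eq hM
  intro j
  rw [aux_sum_mulVec, aux_eig_mulVec hM j]
  have : ∀ i : ι, (hM.eigenvalues i • vecMulVec (fun a => hM.eigenvectorBasis i a)
      (fun a => hM.eigenvectorBasis i a)) *ᵥ (fun a => hM.eigenvectorBasis j a)
      = if i = j then hM.eigenvalues i • (fun a => hM.eigenvectorBasis i a) else 0 := by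
    intro i
    rw [smul_mulVec, aux_vmv_mulVec, aux_dot_eig hM i j]
    split_ifs <;> simp
  simp only [this]
  simp

lemma aux_eigProj_herm (ε : ℝ) : (eigProj hM ε).IsHermitian := by
  show _ᴴ = _
  rw [eigProj, conjTranspose_sum]
  exact Finset.sum_congr rfl fun i _ => aux_vmv_herm _

lemma aux_eigProj_mul_self (ε : ℝ) : eigProj hM ε * eigProj hM ε = eigProj hM ε := by
  rw [eigProj, Finset.sum_mul_sum]
  refine Finset.sum_congr rfl fun i hi => ?_
  have : ∀ j : ι, vecMulVec (fun a => hM.eigenvectorBasis i a)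
        (fun a => hM.eigenvectorBasis i a)
      * vecMulVec (fun a => hM.eigenvectorBasis j a) (fun a => hM.eigenvectorBasis j a)
      = if i = j then vecMulVec (fun a => hM.eigenvectorBasis i a)
          (fun a => hM.eigenvectorBasis j a) else 0 := by
    intro j
    rw [aux_vmv_mul_vmv, aux_dot_eig hM i j]
    split_ifs <;> simp
  simp only [this]
  rw [Finset.sum_ite_eq (Finset.univ.filter fun i => ε ≤ hM.eigenvalues i) i]
  simp [hi]

lemma aux_eigProj_M (ε : ℝ) :
    eigProj hM ε * M * eigProj hM ε
      = ∑ i ∈ Finset.univ.filter (fun i => ε ≤ hM.eigenvalues i),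
          hM.eigenvalues i • vecMulVec (fun a => hM.eigenvectorBasis i a)
            (fun a => hM.eigenvectorBasis i a) := by
  have hMt : Mᵀ = M := by
    have := hM.eq
    rwa [conjTranspose_eq_transpose_of_trivial] at this
  have hPM : eigProj hM ε * M
      = ∑ i ∈ Finset.univ.filter (fun i => ε ≤ hM.eigenvalues i),
          hM.eigenvalues i • vecMulVec (fun a => hM.eigenvectorBasis i a)
            (fun a => hM.eigenvectorBasis i a) := by
    rw [eigProj, Finset.sum_mul]
    refine Finset.sum_congr rfl fun i _ => ?_
    rw [aux_vmv_mul, hMt, aux_eig_mulVec hM i, aux_vmv_smul]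
  rw [hPM, eigProj, Finset.sum_mul]
  refine Finset.sum_congr rfl fun i hi => ?_
  rw [Finset.mul_sum]
  have : ∀ j : ι, hM.eigenvalues i • vecMulVec (fun a => hM.eigenvectorBasis i a)
        (fun a => hM.eigenvectorBasis i a)
      * vecMulVec (fun a => hM.eigenvectorBasis j a) (fun a => hM.eigenvectorBasis j a)
      = if i = j then hM.eigenvalues i • vecMulVec (fun a => hM.eigenvectorBasis i a)
          (fun a => hM.eigenvectorBasis j a) else 0 := by
    intro j
    rw [Matrix.smul_mul, aux_vmv_mul_vmv, aux_dot_eig hM i j]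
    split_ifs <;> simp [smul_smul]
  simp only [this]
  rw [Finset.sum_ite_eq (Finset.univ.filter fun i => ε ≤ hM.eigenvalues i) i]
  simp [hi]

lemma aux_eig_le_one (hMnorm : ‖M‖ ≤ 1) (i : ι) : hM.eigenvalues i ≤ 1 := by
  have hu : ‖hM.eigenvectorBasis i‖ = 1 := hM.eigenvectorBasis.orthonormal.1 i
  have h := M.l2_opNorm_mulVec (hM.eigenvectorBasis i)
  have e : (EuclideanSpace.equiv ι ℝ).symm (M *ᵥ (hM.eigenvectorBasis i))
      = hM.eigenvalues i • hM.eigenvectorBasis i :=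
    congrArg _ (hM.mulVec_eigenvectorBasis i)
  rw [e, norm_smul, hu, Real.norm_eq_abs, mul_one, mul_one] at h
  exact le_trans (le_abs_self _) (le_trans h hMnorm)

lemma aux_eigProj_sub_psd (hMnorm : ‖M‖ ≤ 1) (ε : ℝ) :
    (eigProj hM ε - eigProj hM ε * M * eigProj hM ε).PosSemidef := by
  rw [aux_eigProj_M hM ε]
  nth_rewrite 1 [eigProj]
  rw [← Finset.sum_sub_distrib]
  apply aux_psd_sum
  intro i _
  have h : vecMulVec (fun a => hM.eigenvectorBasis i a) (fun a => hM.eigenvectorBasis i a)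
      - hM.eigenvalues i • vecMulVec (fun a => hM.eigenvectorBasis i a)
          (fun a => hM.eigenvectorBasis i a)
      = (1 - hM.eigenvalues i) • vecMulVec (fun a => hM.eigenvectorBasis i a)
          (fun a => hM.eigenvectorBasis i a) := by
    rw [sub_smul, one_smul]
  rw [h]
  exact aux_psd_smul (aux_psd_vmv _) (by linarith [aux_eig_le_one hM hMnorm i])

lemma aux_eps_psd (ε : ℝ) (hε : 0 < ε) :
    (ε • (1 : Matrix ι ι ℝ) - (M - eigProj hM ε * M * eigProj hM ε)).PosSemidef := by
  have e1 : (1 : Matrix ι ι ℝ) = ∑ i, vecMulVec (fun a => hM.eigenvectorBasis i a)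
      (fun a => hM.eigenvectorBasis i a) := (aux_sum_eigP hM).symm
  have e2 : M = ∑ i, hM.eigenvalues i • vecMulVec (fun a => hM.eigenvectorBasis i a)
      (fun a => hM.eigenvectorBasis i a) := (aux_sum_smul_eigP hM).symm
  have e3 : eigProj hM ε * M * eigProj hM ε
      = ∑ i, (if ε ≤ hM.eigenvalues i then hM.eigenvalues i else 0) •
          vecMulVec (fun a => hM.eigenvectorBasis i a) (fun a => hM.eigenvectorBasis i a) := by
    rw [aux_eigProj_M hM ε, Finset.sum_filter]
    exact Finset.sum_congr rfl fun i _ => by split_ifs <;> simp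
  have heq : ε • (1 : Matrix ι ι ℝ) - (M - eigProj hM ε * M * eigProj hM ε)
      = ∑ i, (ε - (hM.eigenvalues i
            - if ε ≤ hM.eigenvalues i then hM.eigenvalues i else 0)) •
          vecMulVec (fun a => hM.eigenvectorBasis i a) (fun a => hM.eigenvectorBasis i a) := by
    calc ε • (1 : Matrix ι ι ℝ) - (M - eigProj hM ε * M * eigProj hM ε)
        = ε • (∑ i, vecMulVec (fun a => hM.eigenvectorBasis i a)
              (fun a => hM.eigenvectorBasis i a))
          - ((∑ i, hM.eigenvalues i • vecMulVec (fun a => hM.eigenvectorBasis i a)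
              (fun a => hM.eigenvectorBasis i a))
            - ∑ i, (if ε ≤ hM.eigenvalues i then hM.eigenvalues i else 0) •
              vecMulVec (fun a => hM.eigenvectorBasis i a)
                (fun a => hM.eigenvectorBasis i a)) :=
          congrArg₂ (fun A B => ε • A - B) e1 (congrArg₂ Sub.sub e2 e3)
      _ = _ := by
          rw [Finset.smul_sum, ← Finset.sum_sub_distrib, ← Finset.sum_sub_distrib]
          exact Finset.sum_congr rfl fun i _ => by rw [sub_smul, sub_smul]
  rw [heq]
  apply aux_psd_sum
  intro i _
  apply aux_psd_smul (aux_psd_vmv _)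
  split_ifs with h
  · linarith
  · have : hM.eigenvalues i < ε := lt_of_not_ge h
    simp only [sub_zero]
    linarith

end spectral

lemma aux_dot_mulVec_self {ι : Type*} [Fintype ι] (A : Matrix ι ι ℝ) (x : ι → ℝ) :
    (A *ᵥ x) ⬝ᵥ (A *ᵥ x) = x ⬝ᵥ ((Aᵀ * A) *ᵥ x) := by
  rw [Matrix.dotProduct_mulVec, ← Matrix.vecMul_transpose, Matrix.vecMul_vecMul,
    ← Matrix.dotProduct_mulVec]

lemma aux_main {ι : Type*} [Fintype ι] [DecidableEq ι]
    (F Pr M S : Matrix ι ι ℝ) (m v : ι → ℝ) (ε tD : ℝ)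
    (hFt : Fᵀ = F) (hFh : Fᴴ = F) (hMt : Mᵀ = M)
    (hPrt : Prᵀ = Pr) (hPP : Pr * Pr = Pr)
    (h1 : (Pr - Pr * M * Pr).PosSemidef)
    (h2 : (ε • (1 : Matrix ι ι ℝ) - (M - Pr * M * Pr)).PosSemidef)
    (hT : (S - vecMulVec m m).PosSemidef)
    (hFF : ((F * F) * (S - vecMulVec m m)).trace ≤ tD)
    (hε : 0 ≤ ε) (htD : 0 ≤ tD)
    (hfeas : (Pr * F * S * F * Pr).trace - 2 * (v ⬝ᵥ ((Pr * F) *ᵥ m)) + v ⬝ᵥ v ≤ ε * tD) :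
    ((F * M * F)ᵀ * S).trace - m ⬝ᵥ ((F * M * F) *ᵥ m) ≤ 5 * ε * tD := by
  have hTgt : ((F * M * F)ᵀ * S).trace - m ⬝ᵥ ((F * M * F) *ᵥ m)
      = ((F * M * F) * (S - vecMulVec m m)).trace := by
    rw [Matrix.mul_sub, Matrix.trace_sub, aux_trace_mul_vmv]
    congr 2
    rw [Matrix.transpose_mul, Matrix.transpose_mul, hFt, hMt, ← Matrix.mul_assoc]
  rw [hTgt]
  have k2 : 0 ≤ ((F * (ε • (1 : Matrix ι ι ℝ) - (M - Pr * M * Pr)) * F)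
      * (S - vecMulVec m m)).trace := by
    apply aux_psd_trace_nonneg _ hT
    have h := h2.mul_mul_conjTranspose_same F
    rwa [hFh] at h
  have k1 : 0 ≤ ((F * (Pr - Pr * M * Pr) * F) * (S - vecMulVec m m)).trace := by
    apply aux_psd_trace_nonneg _ hT
    have h := h1.mul_mul_conjTranspose_same F
    rwa [hFh] at h
  have e2 : (F * (ε • (1 : Matrix ι ι ℝ) - (M - Pr * M * Pr)) * F) * (S - vecMulVec m m)
      = ε • ((F * F) * (S - vecMulVec m m))
        - ((F * M * F) * (S - vecMulVec m m)
          - (F * (Pr * M * Pr) * F) * (S - vecMulVec m m)) := by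
    rw [Matrix.mul_sub F, Matrix.mul_sub F, Matrix.sub_mul, Matrix.sub_mul,
      Matrix.sub_mul, Matrix.mul_smul, Matrix.mul_one, Matrix.smul_mul, Matrix.smul_mul,
      Matrix.sub_mul]
  have k2' : ((F * M * F) * (S - vecMulVec m m)).trace
      ≤ ε * tD + ((F * (Pr * M * Pr) * F) * (S - vecMulVec m m)).trace := by
    rw [e2, Matrix.trace_sub, Matrix.trace_sub, Matrix.trace_smul] at k2
    have hb : ε • ((F * F) * (S - vecMulVec m m)).trace ≤ ε * tD := by
      rw [smul_eq_mul]
      exact mul_le_mul_of_nonneg_left hFF hε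
    linarith
  have k1' : ((F * (Pr * M * Pr) * F) * (S - vecMulVec m m)).trace
      ≤ ((F * Pr * F) * (S - vecMulVec m m)).trace := by
    have e1 : (F * (Pr - Pr * M * Pr) * F) * (S - vecMulVec m m)
        = (F * Pr * F) * (S - vecMulVec m m)
          - (F * (Pr * M * Pr) * F) * (S - vecMulVec m m) := by
      rw [Matrix.mul_sub F, Matrix.sub_mul, Matrix.sub_mul]
    rw [e1, Matrix.trace_sub] at k1
    linarith
  have hcyc : ((F * Pr * F) * S).trace = (Pr * F * S * F * Pr).trace := by
    have hc1 : (Pr * F * S * F * Pr).trace = (Pr * (Pr * F * S * F)).trace :=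
      Matrix.trace_mul_comm (Pr * F * S * F) Pr
    have hc2 : Pr * (Pr * F * S * F) = Pr * F * S * F := by
      rw [← Matrix.mul_assoc, ← Matrix.mul_assoc, ← Matrix.mul_assoc, hPP]
    have hc3 : (Pr * F * S * F).trace = (F * (Pr * F * S)).trace :=
      (Matrix.trace_mul_comm F (Pr * F * S)).symm
    have hc4 : F * (Pr * F * S) = F * Pr * F * S := by
      rw [← Matrix.mul_assoc, ← Matrix.mul_assoc]
    rw [hc1, hc2, hc3, hc4]
  have hPrF : ((F * Pr * F) * (S - vecMulVec m m)).trace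
      = (Pr * F * S * F * Pr).trace - ((Pr * F) *ᵥ m) ⬝ᵥ ((Pr * F) *ᵥ m) := by
    rw [Matrix.mul_sub, Matrix.trace_sub, aux_trace_mul_vmv, hcyc]
    congr 1
    have hPF : (Pr * F)ᵀ * (Pr * F) = F * Pr * F := by
      rw [Matrix.transpose_mul, hFt, hPrt, Matrix.mul_assoc F Pr (Pr * F),
        ← Matrix.mul_assoc Pr Pr F, hPP, ← Matrix.mul_assoc]
    rw [aux_dot_mulVec_self, hPF]
  have hw : 0 ≤ (v - ((Pr * F) *ᵥ m)) ⬝ᵥ (v - ((Pr * F) *ᵥ m)) := aux_dot_self_nonneg _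
  have hw' : (v - ((Pr * F) *ᵥ m)) ⬝ᵥ (v - ((Pr * F) *ᵥ m))
      = v ⬝ᵥ v - 2 * (v ⬝ᵥ ((Pr * F) *ᵥ m)) + ((Pr * F) *ᵥ m) ⬝ᵥ ((Pr * F) *ᵥ m) := by
    rw [sub_dotProduct, dotProduct_sub, dotProduct_sub,
      dotProduct_comm ((Pr * F) *ᵥ m) v]
    ring
  have hmul : 0 ≤ ε * tD := mul_nonneg hε htD
  rw [hw'] at hw
  linarith


theorem stmt14 {n q : ℕ} (hn : 1 ≤ n) (hq : 1 ≤ q)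
    (D : Matrix (Fin n) (Fin n) ℝ)
    (hDdiag : ∀ i j, i ≠ j → D i j = 0) (hDpos : ∀ i, 0 ≤ D i i)
    (M : Matrix (Fin n × Fin q) (Fin n × Fin q) ℝ) (hM : M.IsHermitian)
    (hMnorm : ‖M‖ ≤ 1)
    (hMdiag : ∀ (i : Fin n) (α β : Fin q), M (i, α) (i, β) = 0)
    (ε : ℝ) (hε : 0 < ε)
    (m : Fin n × Fin q → ℝ)
    (S : Matrix (Fin n × Fin q) (Fin n × Fin q) ℝ) (hS : S.IsHermitian)
    (hPSD : (S - vecMulVec m m).PosSemidef)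
    (hSdiag : ∀ p, 0 ≤ S p p ∧ S p p ≤ m p)
    (hmsum : ∀ i : Fin n, ∑ α, m (i, α) = 1)
    (hfeas : ∃ v : Fin n × Fin q → ℝ,
      Matrix.trace (eigProj hM ε * kronSqrtDiag (q := q) D * S
            * kronSqrtDiag (q := q) D * eigProj hM ε)
          - 2 * (v ⬝ᵥ ((eigProj hM ε * kronSqrtDiag (q := q) D) *ᵥ m))
          + v ⬝ᵥ v ≤ ε * Matrix.trace D) :
    Matrix.trace ((kronSqrtDiag (q := q) D * M * kronSqrtDiag (q := q) D)ᵀ * S)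
        - m ⬝ᵥ ((kronSqrtDiag (q := q) D * M * kronSqrtDiag (q := q) D) *ᵥ m) ≤
      5 * ε * Matrix.trace D := by
  classical
  obtain ⟨v, hv⟩ := hfeas
  have hMt : Mᵀ = M := by
    have h := hM.eq
    rwa [conjTranspose_eq_transpose_of_trivial] at h
  have hFt : (kronSqrtDiag (q := q) D)ᵀ = kronSqrtDiag (q := q) D := by
    rw [kronSqrtDiag, diagonal_transpose]
  have hFh : (kronSqrtDiag (q := q) D)ᴴ = kronSqrtDiag (q := q) D := by
    rw [conjTranspose_eq_transpose_of_trivial, hFt]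
  have hPrt : (eigProj hM ε)ᵀ = eigProj hM ε := by
    rw [← conjTranspose_eq_transpose_of_trivial]
    exact aux_eigProj_herm hM ε
  have htD : 0 ≤ Matrix.trace D := Finset.sum_nonneg fun i _ => hDpos i
  have hFF : ((kronSqrtDiag (q := q) D * kronSqrtDiag (q := q) D)
      * (S - vecMulVec m m)).trace ≤ Matrix.trace D := by
    have hdd : kronSqrtDiag (q := q) D * kronSqrtDiag (q := q) D
        = Matrix.diagonal (fun p : Fin n × Fin q => D p.1 p.1) := by
      rw [kronSqrtDiag, diagonal_mul_diagonal]
      exact congrArg Matrix.diagonal (funext fun p => Real.mul_self_sqrt (hDpos p.1))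
    have htr : ((Matrix.diagonal (fun p : Fin n × Fin q => D p.1 p.1))
        * (S - vecMulVec m m)).trace
        = ∑ p : Fin n × Fin q, D p.1 p.1 * (S - vecMulVec m m) p p := by
      simp [Matrix.trace, Matrix.diag, Matrix.diagonal_mul]
    have hle : ∑ p : Fin n × Fin q, D p.1 p.1 * (S - vecMulVec m m) p p
        ≤ ∑ p : Fin n × Fin q, D p.1 p.1 * m p := by
      apply Finset.sum_le_sum
      intro p _
      apply mul_le_mul_of_nonneg_left _ (hDpos p.1)
      have h1 := (hSdiag p).2
      have h2 : (S - vecMulVec m m) p p = S p p - m p * m p := by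
        simp [Matrix.sub_apply, vecMulVec_apply]
      nlinarith [mul_self_nonneg (m p)]
    have hsum : ∑ p : Fin n × Fin q, D p.1 p.1 * m p = Matrix.trace D := by
      rw [Fintype.sum_prod_type]
      have : ∀ i : Fin n, ∑ α : Fin q, D i i * m (i, α) = D i i := by
        intro i
        rw [← Finset.mul_sum, hmsum i, mul_one]
      rw [Finset.sum_congr rfl fun i _ => this i]
      rfl
    rw [hdd, htr]
    rw [hsum] at hle
    exact hle
  exact aux_main (kronSqrtDiag (q := q) D) (eigProj hM ε) M S m v ε (Matrix.trace D)
    hFt hFh hMt hPrt (aux_eigProj_mul_self hM ε)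
    (aux_eigProj_sub_psd hM hMnorm ε) (aux_eps_psd hM ε hε)
    hPSD hFF hε.le htD hv
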